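/- arXiv:math/0509652 — 2 statements merged into one kernel-verified Lean document; each statement's English description precedes it below -/
import Mathlib

section
/- (Lemma) Let R be a graded domain (an ℕ^l-graded commutative Noetherian domain) and f ∈ R \ {0}. Then the radical ideal √(fR) is a homogeneous ideal if and only if f is a homogeneous element. -/
open DirectSum

section Aux

variable {ι σ A : Type*} [CommRing A] [IsDomain A] [AddCommMonoid ι] [LinearOrder ι] [IsOrderedCancelAddMonoid ι]
  [SetLike σ A] [AddSubmonoidClass σ A] (𝒜 : ι → σ) [GradedRing 𝒜]

/-- In a domain graded by a linearly ordered cancellative monoid, a nonzero divisor of a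
nonzero homogeneous element is homogeneous. -/
theorem homogeneous_of_mul_homogeneous {a b : A} (ha : a ≠ 0) (hb : b ≠ 0)
    (h : SetLike.IsHomogeneousElem 𝒜 (a * b)) : SetLike.IsHomogeneousElem 𝒜 a := by
  classical
  have hSa : (decompose 𝒜 a).support.Nonempty := by
    rw [Finset.nonempty_iff_ne_empty, Ne, DFinsupp.support_eq_empty]
    intro h0
    exact ha (by simpa using congrArg (decompose 𝒜).symm h0)
  have hSb : (decompose 𝒜 b).support.Nonempty := by
    rw [Finset.nonempty_iff_ne_empty, Ne, DFinsupp.support_eq_empty]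
    intro h0
    exact hb (by simpa using congrArg (decompose 𝒜).symm h0)
  -- general key step
  have key : ∀ (ma mb : ι), ma ∈ (decompose 𝒜 a).support → mb ∈ (decompose 𝒜 b).support →
      (∀ i ∈ (decompose 𝒜 a).support, ∀ j ∈ (decompose 𝒜 b).support,
        i + j = ma + mb → i = ma ∧ j = mb) →
      ((decompose 𝒜 (a * b)) (ma + mb) : A) =
        ((decompose 𝒜 a) ma : A) * ((decompose 𝒜 b) mb : A) := by
    intro ma mb hma hmb huniq
    rw [DirectSum.decompose_mul, DirectSum.coe_mul_apply]
    rw [show ((decompose 𝒜 a).support ×ˢ (decompose 𝒜 b).support).filter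
        (fun ij : ι × ι => ij.1 + ij.2 = ma + mb) = {(ma, mb)} from ?_]
    · simp
    · ext ⟨i, j⟩
      simp only [Finset.mem_filter, Finset.mem_product, Finset.mem_singleton, Prod.mk.injEq]
      constructor
      · rintro ⟨⟨hi, hj⟩, hij⟩
        exact huniq i hi j hj hij
      · rintro ⟨rfl, rfl⟩
        exact ⟨⟨hma, hmb⟩, rfl⟩
  set Ma := (decompose 𝒜 a).support.max' hSa with hMa
  set Mb := (decompose 𝒜 b).support.max' hSb with hMb
  set ma := (decompose 𝒜 a).support.min' hSa with hma
  set mb := (decompose 𝒜 b).support.min' hSb with hmb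
  have hkeyM : ((decompose 𝒜 (a * b)) (Ma + Mb) : A) =
      ((decompose 𝒜 a) Ma : A) * ((decompose 𝒜 b) Mb : A) := by
    refine key _ _ (Finset.max'_mem _ _) (Finset.max'_mem _ _) ?_
    intro i hi j hj hij
    have h1 : i ≤ Ma := Finset.le_max' _ _ hi
    have h2 : j ≤ Mb := Finset.le_max' _ _ hj
    have : i = Ma := by
      by_contra hne
      have : i + j < Ma + Mb := add_lt_add_of_lt_of_le (lt_of_le_of_ne h1 hne) h2
      exact absurd hij this.ne
    subst this
    exact ⟨rfl, add_left_cancel hij⟩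
  have hkeym : ((decompose 𝒜 (a * b)) (ma + mb) : A) =
      ((decompose 𝒜 a) ma : A) * ((decompose 𝒜 b) mb : A) := by
    refine key _ _ (Finset.min'_mem _ _) (Finset.min'_mem _ _) ?_
    intro i hi j hj hij
    have h1 : ma ≤ i := Finset.min'_le _ _ hi
    have h2 : mb ≤ j := Finset.min'_le _ _ hj
    have : i = ma := by
      by_contra hne
      have : ma + mb < i + j := add_lt_add_of_lt_of_le (lt_of_le_of_ne h1 (Ne.symm hne)) h2
      exact absurd hij this.ne'
    subst this
    exact ⟨rfl, add_left_cancel hij⟩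
  have hMne : ((decompose 𝒜 a) Ma : A) * ((decompose 𝒜 b) Mb : A) ≠ 0 := by
    apply mul_ne_zero <;>
    · simp only [ne_eq, ZeroMemClass.coe_eq_zero]
      exact DFinsupp.mem_support_iff.mp (by first | exact Finset.max'_mem _ _)
  have hmne : ((decompose 𝒜 a) ma : A) * ((decompose 𝒜 b) mb : A) ≠ 0 := by
    apply mul_ne_zero <;>
    · simp only [ne_eq, ZeroMemClass.coe_eq_zero]
      exact DFinsupp.mem_support_iff.mp (by first | exact Finset.min'_mem _ _)
  obtain ⟨d, hd⟩ := h
  have hdec : decompose 𝒜 (a * b) = DirectSum.of (fun i => 𝒜 i) d ⟨a * b, hd⟩ :=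
    DirectSum.decompose_of_mem 𝒜 hd
  have hsupp : ∀ n : ι, ((decompose 𝒜 (a * b)) n : A) ≠ 0 → n = d := by
    intro n hn
    by_contra hne
    rw [hdec, DirectSum.of_eq_of_ne _ _ _ hne] at hn
    simp at hn
  have heq1 : Ma + Mb = d := hsupp _ (hkeyM ▸ hMne)
  have heq2 : ma + mb = d := hsupp _ (hkeym ▸ hmne)
  have hMaeq : ma = Ma := by
    have hle1 : ma ≤ Ma := Finset.min'_le _ _ (Finset.max'_mem _ _)
    have hle2 : mb ≤ Mb := Finset.min'_le _ _ (Finset.max'_mem _ _)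
    by_contra hne
    have : ma + mb < Ma + Mb := add_lt_add_of_lt_of_le (lt_of_le_of_ne hle1 hne) hle2
    rw [heq1, heq2] at this
    exact lt_irrefl _ this
  have hsingle : (decompose 𝒜 a).support = {Ma} := by
    apply Finset.eq_singleton_iff_nonempty_unique_mem.mpr
    refine ⟨hSa, fun i hi => ?_⟩
    have h1 : i ≤ Ma := Finset.le_max' _ _ hi
    have h2 : ma ≤ i := Finset.min'_le _ _ hi
    exact le_antisymm h1 (hMaeq ▸ h2)
  refine ⟨Ma, ?_⟩
  have := DirectSum.sum_support_decompose 𝒜 a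
  rw [hsingle, Finset.sum_singleton] at this
  rw [← this]
  exact SetLike.coe_mem _

theorem aux_radical_iff (f : A) (hf : f ≠ 0) :
    (Ideal.span {f}).radical.IsHomogeneous 𝒜 ↔ SetLike.IsHomogeneousElem 𝒜 f := by
  classical
  constructor
  · intro hI
    have hSf : (decompose 𝒜 f).support.Nonempty := by
      rw [Finset.nonempty_iff_ne_empty, Ne, DFinsupp.support_eq_empty]
      intro h0
      exact hf (by simpa using congrArg (decompose 𝒜).symm h0)
    obtain ⟨i, hi⟩ := hSf
    have hfmem : f ∈ (Ideal.span {f}).radical :=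
      Ideal.le_radical (Ideal.mem_span_singleton_self f)
    have hcmem : ((decompose 𝒜 f) i : A) ∈ (Ideal.span {f}).radical := hI i hfmem
    obtain ⟨n, hn⟩ := hcmem
    obtain ⟨g, hg⟩ := Ideal.mem_span_singleton'.mp hn
    have hc0 : ((decompose 𝒜 f) i : A) ≠ 0 := by
      simpa [ne_eq, ZeroMemClass.coe_eq_zero] using DFinsupp.mem_support_iff.mp hi
    have hpow0 : ((decompose 𝒜 f) i : A) ^ n ≠ 0 := pow_ne_zero _ hc0
    have hg0 : g ≠ 0 := by
      rintro rfl
      rw [zero_mul] at hg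
      exact hpow0 hg.symm
    have hhom : SetLike.IsHomogeneousElem 𝒜 (f * g) := by
      rw [mul_comm, hg]
      exact ⟨n • i, SetLike.pow_mem_graded n (SetLike.coe_mem _)⟩
    exact homogeneous_of_mul_homogeneous 𝒜 hf hg0 hhom
  · intro hfh
    exact (Ideal.homogeneous_span 𝒜 {f} (by rintro x rfl; exact hfh)).radical

end Aux

set_option maxHeartbeats 1000000 in
/-- **Lemma.**  Let `R` be an `ℕ^l`-graded commutative Noetherian
domain and `f ∈ R \ {0}`.  Then `√(fR)` is a homogeneous ideal iff `f` is a
homogeneous element. -/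
theorem radical_span_singleton_isHomogeneous_iff
    (R : Type) [CommRing R] [IsDomain R] [IsNoetherianRing R] (l : ℕ)
    (𝒜 : (Fin l → ℕ) → AddSubgroup R) [GradedRing 𝒜]
    (f : R) (hf : f ≠ 0) :
    (Ideal.span {f}).radical.IsHomogeneous 𝒜 ↔ SetLike.IsHomogeneousElem 𝒜 f := by
  letI lin0 : LinearOrder (Lex (Fin l → ℕ)) := inferInstance
  letI lin : LinearOrder (Lex (Fin l → ℕ)) :=
    { lin0 with
      toDecidableEq := instDecidableEqLex _
      compare_eq_compareOfLessAndEq := fun a b => by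
        rw [lin0.compare_eq_compareOfLessAndEq a b]
        congr 1 }
  haveI : IsOrderedCancelAddMonoid (Lex (Fin l → ℕ)) := inferInstance
  letI 𝒜' : Lex (Fin l → ℕ) → AddSubgroup R := fun i => 𝒜 (ofLex i)
  haveI gm : SetLike.GradedMonoid 𝒜' := inferInstanceAs (SetLike.GradedMonoid 𝒜)
  haveI dcp : DirectSum.Decomposition 𝒜' :=
    letI d : DirectSum.Decomposition 𝒜 := inferInstance
    ⟨d.decompose', d.left_inv, d.right_inv⟩
  haveI : GradedRing 𝒜' := { gm, dcp with }
  have hom_iff : ∀ x : R, SetLike.IsHomogeneousElem 𝒜 x ↔ SetLike.IsHomogeneousElem 𝒜' x := fun x =>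
    ⟨fun ⟨i, hi⟩ => ⟨toLex i, hi⟩, fun ⟨i, hi⟩ => ⟨ofLex i, hi⟩⟩
  have transfer : ∀ I : Ideal R, I.IsHomogeneous 𝒜 ↔ I.IsHomogeneous 𝒜' := by
    intro I
    rw [Ideal.IsHomogeneous.iff_exists 𝒜 I, Ideal.IsHomogeneous.iff_exists 𝒜' I]
    constructor
    · rintro ⟨S, rfl⟩
      refine ⟨{x : SetLike.homogeneousSubmonoid 𝒜' | (x : R) ∈ ((↑) : _ → R) '' S}, ?_⟩
      congr 1
      ext x
      simp only [Set.mem_image, Set.mem_setOf_eq]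
      constructor
      · rintro ⟨y, hy, rfl⟩
        exact ⟨⟨(y : R), (hom_iff _).mp y.2⟩, ⟨y, hy, rfl⟩, rfl⟩
      · rintro ⟨z, ⟨y, hy, hyz⟩, rfl⟩
        exact ⟨y, hy, hyz⟩
    · rintro ⟨S, rfl⟩
      refine ⟨{x : SetLike.homogeneousSubmonoid 𝒜 | (x : R) ∈ ((↑) : _ → R) '' S}, ?_⟩
      congr 1
      ext x
      simp only [Set.mem_image, Set.mem_setOf_eq]
      constructor
      · rintro ⟨y, hy, rfl⟩
        exact ⟨⟨(y : R), (hom_iff _).mpr y.2⟩, ⟨y, hy, rfl⟩, rfl⟩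
      · rintro ⟨z, ⟨y, hy, hyz⟩, rfl⟩
        exact ⟨y, hy, hyz⟩
  rw [transfer, hom_iff]
  exact aux_radical_iff 𝒜' f hf
end

section
/- (Corollary of Lemma) Let R be a graded domain and I a homogeneous ideal of R. Then ara(I) ≤ 1 if and only if ara^h(I) ≤ 1; that is, √I = √(fR) for some f ∈ R if and only if √I = √(gR) for some homogeneous g ∈ R. -/
open DirectSum

/-- In a graded ring (domain not needed here), the component of `a * b` in an "extreme"
degree `i + j` is the product of the components, provided `(i, j)` is the only pair of
degrees in the supports adding up to `i + j`. -/
lemma key_mul_component {ι R : Type*} [CommRing R]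
    [AddCommMonoid ι] [LinearOrder ι] [IsOrderedCancelAddMonoid ι]
    (𝒜 : ι → AddSubgroup R) [GradedRing 𝒜]
    {a b : R} {i j : ι}
    [∀ (k : ι) (x : 𝒜 k), Decidable (x ≠ 0)]
    (H : ∀ p q : ι, p ∈ (decompose 𝒜 a).support → q ∈ (decompose 𝒜 b).support →
        p + q = i + j → p = i ∧ q = j) :
    (decompose 𝒜 (a * b) (i + j) : R) = (decompose 𝒜 a i : R) * (decompose 𝒜 b j : R) := by
  classical
  rw [DirectSum.decompose_mul, DirectSum.coe_mul_apply]
  refine Finset.sum_eq_single (i, j) ?_ ?_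
  · rintro ⟨p, q⟩ hpq hne
    exfalso
    rw [Finset.mem_filter, Finset.mem_product] at hpq
    obtain ⟨⟨h1, h2⟩, h3⟩ := hpq
    obtain ⟨rfl, rfl⟩ := H p q h1 h2 h3
    exact hne rfl
  · intro hnmem
    rw [Finset.mem_filter, Finset.mem_product] at hnmem
    push_neg at hnmem
    by_cases hi : i ∈ (decompose 𝒜 a).support
    · by_cases hj : j ∈ (decompose 𝒜 b).support
      · exact absurd rfl (hnmem ⟨hi, hj⟩)
      · rw [DFinsupp.notMem_support_iff.mp hj, ZeroMemClass.coe_zero, mul_zero]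
    · rw [DFinsupp.notMem_support_iff.mp hi, ZeroMemClass.coe_zero, zero_mul]

/-- **Key lemma**: in a graded domain, a nonzero element whose principal ideal has a
homogeneous radical is itself homogeneous. -/
lemma homogeneous_of_radical_span_isHomogeneous {ι R : Type*} [CommRing R] [IsDomain R]
    [AddCommMonoid ι] [LinearOrder ι] [IsOrderedCancelAddMonoid ι]
    (𝒜 : ι → AddSubgroup R) [GradedRing 𝒜] {f : R} (hf : f ≠ 0)
    (hrad : ((Ideal.span {f}).radical).IsHomogeneous 𝒜) :
    SetLike.IsHomogeneousElem 𝒜 f := by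
  classical
  have hd : decompose 𝒜 f ≠ 0 := by
    intro h0
    apply hf
    have := congrArg (decompose 𝒜).symm h0
    simpa using this
  have hne : ((decompose 𝒜 f).support).Nonempty := by
    rw [Finset.nonempty_iff_ne_empty]
    intro h
    exact hd (DFinsupp.support_eq_empty.mp h)
  set c := ((decompose 𝒜 f).support).max' hne with hc
  set e := ((decompose 𝒜 f).support).min' hne with he
  have hce : e ≤ c := Finset.min'_le _ _ (Finset.max'_mem _ hne)
  rcases eq_or_lt_of_le hce with heq | hlt
  · -- single component: `f` is homogeneous
    refine ⟨c, ?_⟩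
    have hsupp : (decompose 𝒜 f).support = {c} := by
      apply Finset.Subset.antisymm
      · intro x hx
        rw [Finset.mem_singleton]
        exact le_antisymm (Finset.le_max' _ x hx) (heq ▸ Finset.min'_le _ x hx)
      · intro x hx
        rw [Finset.mem_singleton] at hx
        exact hx ▸ Finset.max'_mem _ hne
    have hsum := DirectSum.sum_support_decompose 𝒜 f
    rw [hsupp, Finset.sum_singleton] at hsum
    rw [← hsum]
    exact (decompose 𝒜 f c).2
  · exfalso
    have hfrad : f ∈ (Ideal.span {f}).radical :=
      Ideal.le_radical (Ideal.mem_span_singleton_self f)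
    have hcrad : (decompose 𝒜 f c : R) ∈ (Ideal.span {f}).radical := hrad c hfrad
    obtain ⟨n, hn⟩ := Ideal.mem_radical_iff.mp hcrad
    obtain ⟨u, hu⟩ := Ideal.mem_span_singleton.mp hn
    have hfc0 : (decompose 𝒜 f c : R) ≠ 0 := by
      have hmem := Finset.max'_mem _ hne
      rw [DFinsupp.mem_support_iff] at hmem
      simpa [← ZeroMemClass.coe_eq_zero] using hmem
    have hfe0 : (decompose 𝒜 f e : R) ≠ 0 := by
      have hmem := Finset.min'_mem _ hne
      rw [DFinsupp.mem_support_iff] at hmem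
      simpa [← ZeroMemClass.coe_eq_zero] using hmem
    have hu0 : u ≠ 0 := by
      rintro rfl
      rw [mul_zero] at hu
      exact pow_ne_zero n hfc0 hu
    have hdu : ((decompose 𝒜 u).support).Nonempty := by
      rw [Finset.nonempty_iff_ne_empty]
      intro h
      apply hu0
      have h0 : decompose 𝒜 u = 0 := DFinsupp.support_eq_empty.mp h
      have := congrArg (decompose 𝒜).symm h0
      simpa using this
    set cu := ((decompose 𝒜 u).support).max' hdu with hcu
    set eu := ((decompose 𝒜 u).support).min' hdu with heu
    have hucu0 : (decompose 𝒜 u cu : R) ≠ 0 := by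
      have hmem := Finset.max'_mem _ hdu
      rw [DFinsupp.mem_support_iff] at hmem
      simpa [← ZeroMemClass.coe_eq_zero] using hmem
    have hueu0 : (decompose 𝒜 u eu : R) ≠ 0 := by
      have hmem := Finset.min'_mem _ hdu
      rw [DFinsupp.mem_support_iff] at hmem
      simpa [← ZeroMemClass.coe_eq_zero] using hmem
    have hpow : ((decompose 𝒜 f c : R)) ^ n ∈ 𝒜 (n • c) :=
      SetLike.pow_mem_graded n (decompose 𝒜 f c).2
    -- top component of `f * u`
    have h1 : (decompose 𝒜 (f * u) (c + cu) : R)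
        = (decompose 𝒜 f c : R) * (decompose 𝒜 u cu : R) := by
      refine key_mul_component 𝒜 (fun p q hp hq hpq => ?_)
      have h1' := Finset.le_max' _ p hp
      have h2' := Finset.le_max' _ q hq
      have hpc : p = c := by
        by_contra hne'
        exact absurd hpq (ne_of_lt (add_lt_add_of_lt_of_le (lt_of_le_of_ne h1' hne') h2'))
      exact ⟨hpc, by rw [hpc] at hpq; exact add_left_cancel hpq⟩
    -- bottom component of `f * u`
    have h2 : (decompose 𝒜 (f * u) (e + eu) : R)
        = (decompose 𝒜 f e : R) * (decompose 𝒜 u eu : R) := by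
      refine key_mul_component 𝒜 (fun p q hp hq hpq => ?_)
      have h1' := Finset.min'_le _ p hp
      have h2' := Finset.min'_le _ q hq
      have hpe : p = e := by
        by_contra hne'
        exact absurd hpq (ne_of_gt (add_lt_add_of_lt_of_le (lt_of_le_of_ne h1' (Ne.symm hne')) h2'))
      exact ⟨hpe, by rw [hpe] at hpq; exact add_left_cancel hpq⟩
    have hval1 : c + cu = n • c := by
      by_contra hne'
      have hzero : (decompose 𝒜 (f * u) (c + cu) : R) = 0 := by
        rw [← hu]
        exact DirectSum.decompose_of_mem_ne 𝒜 hpow (fun hh => hne' hh.symm)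
      rw [h1] at hzero
      exact mul_ne_zero hfc0 hucu0 hzero
    have hval2 : e + eu = n • c := by
      by_contra hne'
      have hzero : (decompose 𝒜 (f * u) (e + eu) : R) = 0 := by
        rw [← hu]
        exact DirectSum.decompose_of_mem_ne 𝒜 hpow (fun hh => hne' hh.symm)
      rw [h2] at hzero
      exact mul_ne_zero hfe0 hueu0 hzero
    have hlt2 : e + eu < c + cu :=
      add_lt_add_of_lt_of_le hlt (Finset.min'_le _ _ (Finset.max'_mem _ hdu))
    rw [hval1, hval2] at hlt2
    exact lt_irrefl _ hlt2

set_option maxHeartbeats 2000000 in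
set_option synthInstance.maxHeartbeats 400000 in
/-- **Corollary of the Lemma.**  Let `R` be an `ℕ^l`-graded
commutative Noetherian domain and `I` a homogeneous ideal of `R`.  Then
`ara(I) ≤ 1` iff `ara^h(I) ≤ 1`; that is, `√I = √(fR)` for some `f ∈ R` iff
`√I = √(gR)` for some homogeneous `g ∈ R`. -/
theorem arithmeticRank_le_one_iff_homogeneousArithmeticRank_le_one
    (R : Type) [CommRing R] [IsDomain R] [IsNoetherianRing R] (l : ℕ)
    (𝒜 : (Fin l → ℕ) → AddSubgroup R) [GradedRing 𝒜]
    (I : Ideal R) (hI : I.IsHomogeneous 𝒜) :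
    (∃ f : R, I.radical = (Ideal.span {f}).radical) ↔
      (∃ g : R, SetLike.IsHomogeneousElem 𝒜 g ∧
        I.radical = (Ideal.span {g}).radical) := by
  constructor
  · rintro ⟨f, hf⟩
    by_cases hf0 : f = 0
    · exact ⟨f, ⟨0, hf0 ▸ zero_mem _⟩, hf⟩
    · -- pass to the lexicographic order on `Fin l → ℕ`
      haveI : WellFoundedLT (Fin l) := inferInstance
      letI lin0 : LinearOrder (Lex (Fin l → ℕ)) :=
        Pi.Lex.linearOrder
      letI : LinearOrder (Lex (Fin l → ℕ)) :=
        { lin0 with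
          toDecidableEq := instDecidableEqLex (Fin l → ℕ)
          compare_eq_compareOfLessAndEq := fun a b => by
            rw [lin0.compare_eq_compareOfLessAndEq a b]
            congr 1 }
      letI 𝒜' : Lex (Fin l → ℕ) → AddSubgroup R := fun i => 𝒜 (ofLex i)
      letI : GradedRing 𝒜' := ‹GradedRing 𝒜›
      have hI' : I.IsHomogeneous 𝒜' := fun i r hr => hI (ofLex i) hr
      have hrad : ((Ideal.span {f}).radical).IsHomogeneous 𝒜' := by
        have h := hI'.radical
        rwa [hf] at h
      obtain ⟨i, hi⟩ := homogeneous_of_radical_span_isHomogeneous 𝒜' hf0 hrad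
      exact ⟨f, ⟨ofLex i, hi⟩, hf⟩
  · rintro ⟨g, _, hg⟩
    exact ⟨g, hg⟩
end
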